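/- arXiv:2512.16054 — 3 statements merged into one kernel-verified Lean document; each statement's English description precedes it below -/
import Mathlib

section
/- Let $A_+ > 0$, $A > 0$, and let $(V_j)_{j\ge 1}$ be complex numbers with $|V_j| \le A^j$ for all $j \ge 1$. Fix $\alpha \in \mathbb{C}$, $v_0 \in \mathbb{C}$, and define $(v_j)_{j \ge 1}$ recursively by $j A_+^2 (j - \alpha) v_j = \sum_{\ell=1}^{j} V_\ell v_{j-\ell}$ (assuming $\alpha \notin \{1,\dots,j\}$ so the recursion is well-defined). Then for every $\varepsilon \in (0, A_+^{-2})$ and every $\alpha$ with $\mathrm{dist}(\alpha, \mathbb{N}_{\ge 1}) > \varepsilon$, one has $|v_j| \le A^j |v_0| / (\varepsilon^j A_+^{2j})$ for all $j \ge 0$. -/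
/-!
Since `|j - α| > ε`, the recursion gives `j q |v_j| ≤ ∑_{ℓ=1}^{j} A^ℓ |v_{j-ℓ}|` with
`q = ε A₊² < 1`. By strong induction `q^k |v_k| ≤ A^k |v_0|` for `k < j`, and as
`q^(j-1) ≤ q^(j-ℓ)` each of the `j` terms of `q^(j-1) ∑ A^ℓ |v_{j-ℓ}|` is at most `A^j |v_0|`,
so the factor `j` cancels.
-/

open Finset

theorem pow_mul_le_pow_mul_of_mul_le_convolution {a : ℕ → ℝ} {A q : ℝ} (ha : ∀ j, 0 ≤ a j)
    (hA : 0 ≤ A) (hq₀ : 0 ≤ q) (hq₁ : q ≤ 1)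
    (hrec : ∀ j, 1 ≤ j → j * q * a j ≤ ∑ ℓ ∈ Icc 1 j, A ^ ℓ * a (j - ℓ)) (j : ℕ) :
    q ^ j * a j ≤ A ^ j * a 0 := by
  induction j using Nat.strong_induction_on with
  | _ j ih =>
  rcases Nat.eq_zero_or_pos j with rfl | hj
  · simp
  have hj' : (0 : ℝ) < j := by exact_mod_cast hj
  refine le_of_mul_le_mul_left ?_ hj'
  calc (j : ℝ) * (q ^ j * a j) = q ^ (j - 1) * (j * q * a j) := by
        rw [← Nat.sub_add_cancel hj, pow_succ]; push_cast; ring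
    _ ≤ q ^ (j - 1) * ∑ ℓ ∈ Icc 1 j, A ^ ℓ * a (j - ℓ) := by
        gcongr; exact hrec j hj
    _ = ∑ ℓ ∈ Icc 1 j, A ^ ℓ * (q ^ (j - 1) * a (j - ℓ)) := by
        rw [mul_sum]; congr! 1 with ℓ; ring
    _ ≤ ∑ ℓ ∈ Icc 1 j, A ^ ℓ * (A ^ (j - ℓ) * a 0) := by
        refine sum_le_sum fun ℓ hℓ => mul_le_mul_of_nonneg_left ?_ (pow_nonneg hA ℓ)
        obtain ⟨hℓ₁, -⟩ := mem_Icc.mp hℓ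
        calc q ^ (j - 1) * a (j - ℓ) ≤ q ^ (j - ℓ) * a (j - ℓ) := by
              gcongr (?_ * _)
              · exact ha _
              · exact pow_le_pow_of_le_one hq₀ hq₁ (by omega)
          _ ≤ A ^ (j - ℓ) * a 0 := ih _ (by omega)
    _ = j * (A ^ j * a 0) := by
        rw [sum_congr rfl fun ℓ hℓ => by
          rw [← mul_assoc, ← pow_add, Nat.add_sub_cancel' (mem_Icc.mp hℓ).2]]
        simp

theorem mul_norm_le_convolution_of_recursion {Ap A ε : ℝ} {V v : ℕ → ℂ} {α : ℂ}
    (hV : ∀ j : ℕ, 1 ≤ j → ‖V j‖ ≤ A ^ j)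
    (hrec : ∀ j : ℕ, 1 ≤ j →
      (j : ℂ) * (Ap : ℂ) ^ 2 * ((j : ℂ) - α) * v j = ∑ ℓ ∈ Icc 1 j, V ℓ * v (j - ℓ))
    (hdist : ∀ n : ℕ, 1 ≤ n → ε < ‖α - n‖) {j : ℕ} (hj : 1 ≤ j) :
    j * (ε * Ap ^ 2) * ‖v j‖ ≤ ∑ ℓ ∈ Icc 1 j, A ^ ℓ * ‖v (j - ℓ)‖ := by
  have hnorm := congrArg (‖·‖) (hrec j hj)
  simp only [norm_mul, norm_pow, Complex.norm_natCast, Complex.norm_real, Real.norm_eq_abs,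
    sq_abs] at hnorm
  calc j * (ε * Ap ^ 2) * ‖v j‖ = j * Ap ^ 2 * ε * ‖v j‖ := by ring
    _ ≤ j * Ap ^ 2 * ‖(j : ℂ) - α‖ * ‖v j‖ := by
        rw [norm_sub_rev]
        gcongr
        exact (hdist j hj).le
    _ = ‖∑ ℓ ∈ Icc 1 j, V ℓ * v (j - ℓ)‖ := hnorm
    _ ≤ ∑ ℓ ∈ Icc 1 j, ‖V ℓ‖ * ‖v (j - ℓ)‖ := by
        simpa only [norm_mul] using norm_sum_le (Icc 1 j) fun ℓ => V ℓ * v (j - ℓ)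
    _ ≤ ∑ ℓ ∈ Icc 1 j, A ^ ℓ * ‖v (j - ℓ)‖ := by
        gcongr with ℓ hℓ
        exact hV ℓ (mem_Icc.mp hℓ).1

/-- Estimate on recursively defined Taylor coefficients of the outgoing profile. -/
theorem stmt_0 (Ap A : ℝ) (hAp : 0 < Ap) (hA : 0 < A)
    (V : ℕ → ℂ) (hV : ∀ j : ℕ, 1 ≤ j → ‖V j‖ ≤ A ^ j)
    (α : ℂ) (v : ℕ → ℂ)
    (hrec : ∀ j : ℕ, 1 ≤ j →
      (j : ℂ) * (Ap : ℂ) ^ 2 * ((j : ℂ) - α) * v j = ∑ ℓ ∈ Finset.Icc 1 j, V ℓ * v (j - ℓ))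
    (ε : ℝ) (hε : 0 < ε) (hε' : ε < Ap ^ (-2 : ℤ))
    (hdist : ∀ n : ℕ, 1 ≤ n → ε < ‖α - n‖) :
    ∀ j : ℕ, ‖v j‖ ≤ A ^ j * ‖v 0‖ / (ε ^ j * Ap ^ (2 * j)) := by
  intro j
  have hq₀ : 0 < ε * Ap ^ 2 := by positivity
  have hq₁ : ε * Ap ^ 2 ≤ 1 := by
    rw [zpow_neg, zpow_ofNat] at hε'
    exact (le_inv_mul_iff₀' (by positivity)).mp (by simpa using hε'.le)
  have hscaled := pow_mul_le_pow_mul_of_mul_le_convolution (fun _ => norm_nonneg _) hA.le hq₀.le hq₁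
    (fun _ hj => mul_norm_le_convolution_of_recursion hV hrec hdist hj) j
  rwa [le_div_iff₀ (by positivity), mul_comm, pow_mul, ← mul_pow]
end

section
/- There exists a constant $C > 0$ such that for all $z \in \mathbb{C}$, $|1/\Gamma(z)| \le C \exp\big(C |z| \log(1 + |z|)\big)$, where $\Gamma$ is the Gamma function. -/
/-!
In the right half-plane `1/Γ` grows at most like `exp (π ‖w‖)`. Away from the real axis this
is the reflection formula `1/Γ(w) = Γ(1 - w) sin(πw)/π` together with `‖Γ(1 - w)‖ ≤ 1`:
shifting `1 - w` by integers into the strip `1 ≤ re ≤ 2` only increases `‖Γ‖`, and there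
`‖Γ s‖ ≤ Γ(re s) ≤ 1`. Near the real axis `1/Γ` is bounded, by compactness and a downward
shift. A point `z` with `re z < 0` is moved into the right half-plane by
`1/Γ(z) = z (z + 1) ⋯ (z + n - 1) / Γ(z + n)` with `n ≤ ‖z‖ + 1`; the product, at most
`(2‖z‖ + 1) ^ n`, produces the `‖z‖ log ‖z‖` in the exponent.
-/

open scoped Real

namespace Real

lemma Gamma_le_one_of_mem_Icc {x : ℝ} (hx : x ∈ Set.Icc 1 2) : Gamma x ≤ 1 := by
  have h := convexOn_Gamma.le_max_of_mem_Icc (Set.mem_Ioi.2 one_pos) (Set.mem_Ioi.2 two_pos) hx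
  rwa [Gamma_one, Gamma_two, max_self] at h

lemma two_mul_add_one_mul_pi_add_log_le {r : ℝ} (hr : 0 ≤ r) :
    (2 * r + 1) * (π + log (2 * r + 1)) ≤ 16 + 21 * (r * log (1 + r)) := by
  have hrL : 0 ≤ r * log (1 + r) := mul_nonneg hr (log_nonneg (by linarith))
  have hπ := pi_lt_d2
  rcases le_total r 1 with h1 | h1
  · have hlog : log (2 * r + 1) ≤ 2 * r := by
      linarith [log_le_sub_one_of_pos (by linarith : 0 < 2 * r + 1)]
    nlinarith
  · have hL2 : log 2 ≤ log (1 + r) := log_le_log two_pos (by linarith)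
    have hlog : log (2 * r + 1) ≤ 2 * log (1 + r) := by
      calc log (2 * r + 1) ≤ log (2 * (1 + r)) := log_le_log (by linarith) (by linarith)
        _ = log 2 + log (1 + r) := log_mul two_ne_zero (by linarith)
        _ ≤ 2 * log (1 + r) := by linarith
    have hpi : π ≤ 5 * log (1 + r) := by linarith [log_two_gt_d9]
    nlinarith

end Real

namespace Complex

lemma norm_sin_le_exp_norm (z : ℂ) : ‖sin z‖ ≤ Real.exp ‖z‖ := by
  have hexp : ∀ u : ℂ, ‖u‖ = ‖z‖ → ‖exp u‖ ≤ Real.exp ‖z‖ := fun u hu =>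
    hu ▸ norm_exp_le_exp_norm u
  calc ‖sin z‖ = ‖exp (-z * I) - exp (z * I)‖ / 2 := by simp [sin]
    _ ≤ (‖exp (-z * I)‖ + ‖exp (z * I)‖) / 2 := by gcongr; exact norm_sub_le _ _
    _ ≤ (Real.exp ‖z‖ + Real.exp ‖z‖) / 2 := by gcongr <;> exact hexp _ (by simp)
    _ = Real.exp ‖z‖ := by ring

lemma norm_Gamma_le_Gamma_re {s : ℂ} (hs : 0 < s.re) : ‖Gamma s‖ ≤ Real.Gamma s.re := by
  rw [Gamma_eq_integral hs, Real.Gamma_eq_integral hs, GammaIntegral]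
  refine MeasureTheory.norm_integral_le_of_norm_le (Real.GammaIntegral_convergent hs) ?_
  filter_upwards [MeasureTheory.ae_restrict_mem measurableSet_Ioi] with x hx
  rw [norm_mul, norm_real, norm_cpow_eq_rpow_re_of_pos hx, sub_re, one_re,
    Real.norm_of_nonneg (Real.exp_pos _).le]

lemma norm_Gamma_le_norm_Gamma_add_nat {s : ℂ} {n : ℕ} (h : ∀ k < n, 1 ≤ ‖s + k‖) :
    ‖Gamma s‖ ≤ ‖Gamma (s + n)‖ := by
  induction n with
  | zero => simp
  | succ n ih =>
    have hn : 1 ≤ ‖s + n‖ := h n n.lt_succ_self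
    calc ‖Gamma s‖ ≤ ‖Gamma (s + n)‖ := ih fun k hk => h k (hk.trans n.lt_succ_self)
      _ ≤ ‖s + n‖ * ‖Gamma (s + n)‖ := le_mul_of_one_le_left (norm_nonneg _) hn
      _ = ‖Gamma (s + ↑(n + 1))‖ := by
        rw [Nat.cast_succ, ← add_assoc, Gamma_add_one _ (norm_pos_iff.1 (one_pos.trans_le hn)),
          norm_mul]

lemma norm_inv_Gamma_le_pow_mul_norm_inv_Gamma_add_nat (z : ℂ) (n : ℕ) :
    ‖(Gamma z)⁻¹‖ ≤ (‖z‖ + n) ^ n * ‖(Gamma (z + n))⁻¹‖ := by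
  induction n with
  | zero => simp
  | succ n ih =>
    have hstep : ‖(Gamma (z + n))⁻¹‖ ≤ (‖z‖ + n) * ‖(Gamma (z + ↑(n + 1)))⁻¹‖ := by
      rw [one_div_Gamma_eq_self_mul_one_div_Gamma_add_one, norm_mul, Nat.cast_succ, ← add_assoc]
      gcongr
      exact (norm_add_le _ _).trans_eq (by simp)
    calc ‖(Gamma z)⁻¹‖ ≤ (‖z‖ + n) ^ n * ‖(Gamma (z + n))⁻¹‖ := ih
      _ ≤ (‖z‖ + n) ^ n * ((‖z‖ + n) * ‖(Gamma (z + ↑(n + 1)))⁻¹‖) := by gcongr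
      _ ≤ (‖z‖ + ↑(n + 1)) ^ (n + 1) * ‖(Gamma (z + ↑(n + 1)))⁻¹‖ := by
        rw [← mul_assoc, ← pow_succ]
        gcongr
        simp

lemma inv_Gamma_eq_Gamma_one_sub_mul_sin_div {w : ℂ} (hw : sin (π * w) ≠ 0) :
    (Gamma w)⁻¹ = Gamma (1 - w) * sin (π * w) / π := by
  have h := Gamma_mul_Gamma_one_sub w
  have hπ : (π : ℂ) ≠ 0 := ofReal_ne_zero.2 Real.pi_ne_zero
  have hΓ : Gamma w ≠ 0 := fun h0 => div_ne_zero hπ hw (by rw [← h, h0, zero_mul])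
  field_simp
  rw [h]
  field_simp

lemma norm_Gamma_one_sub_le_one {w : ℂ} (hre : 0 ≤ w.re) (him : 1 ≤ |w.im|) :
    ‖Gamma (1 - w)‖ ≤ 1 := by
  set n := ⌈w.re⌉₊
  have hn : w.re ≤ n := Nat.le_ceil _
  have hn' : (n : ℝ) < w.re + 1 := Nat.ceil_lt_add_one hre
  have hs : (1 - w + n).re ∈ Set.Icc 1 2 := by
    simp only [add_re, sub_re, one_re, natCast_re, Set.mem_Icc]
    constructor <;> linarith
  calc ‖Gamma (1 - w)‖ ≤ ‖Gamma (1 - w + n)‖ := norm_Gamma_le_norm_Gamma_add_nat fun k _ =>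
        him.trans ((abs_im_le_norm _).trans_eq' (by simp))
    _ ≤ Real.Gamma (1 - w + n).re := norm_Gamma_le_Gamma_re (by linarith [hs.1])
    _ ≤ 1 := Real.Gamma_le_one_of_mem_Icc hs

lemma norm_inv_Gamma_le_exp_of_one_le_abs_im {w : ℂ} (hre : 0 ≤ w.re) (him : 1 ≤ |w.im|) :
    ‖(Gamma w)⁻¹‖ ≤ Real.exp (π * ‖w‖) := by
  have hsin : sin (π * w) ≠ 0 := by
    rw [sin_ne_zero_iff]
    intro k hk
    have h := congrArg im hk
    simp only [mul_im, ofReal_re, ofReal_im, intCast_re, intCast_im, zero_mul, mul_zero,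
      add_zero] at h
    rw [(mul_eq_zero.1 h).resolve_left Real.pi_ne_zero, abs_zero] at him
    exact absurd him (by norm_num)
  have hsin_le : ‖sin (π * w)‖ ≤ Real.exp (π * ‖w‖) := by
    simpa [norm_mul, abs_of_pos Real.pi_pos] using norm_sin_le_exp_norm (π * w)
  rw [inv_Gamma_eq_Gamma_one_sub_mul_sin_div hsin, norm_div, norm_mul, norm_real,
    Real.norm_of_nonneg Real.pi_pos.le]
  calc ‖Gamma (1 - w)‖ * ‖sin (π * w)‖ / π ≤ 1 * Real.exp (π * ‖w‖) / π := by
        gcongr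
        exact norm_Gamma_one_sub_le_one hre him
    _ ≤ Real.exp (π * ‖w‖) := by
        rw [one_mul]
        exact div_le_self (Real.exp_pos _).le (by linarith [Real.pi_gt_three])

lemma exists_norm_inv_Gamma_le_of_abs_im_le_one :
    ∃ B, ∀ w : ℂ, 0 ≤ w.re → |w.im| ≤ 1 → ‖(Gamma w)⁻¹‖ ≤ B := by
  obtain ⟨B, hB⟩ := (isCompact_closedBall (0 : ℂ) 3).exists_bound_of_continuousOn
    differentiable_one_div_Gamma.continuous.continuousOn
  have hbox : ∀ w : ℂ, 0 ≤ w.re → w.re ≤ 2 → |w.im| ≤ 1 → ‖(Gamma w)⁻¹‖ ≤ B :=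
    fun w h0 h2 him => hB w <| mem_closedBall_zero_iff.2 <|
      (norm_le_abs_re_add_abs_im w).trans (by rw [abs_of_nonneg h0]; linarith)
  refine ⟨B, fun w h0 him => ?_⟩
  rcases le_or_gt w.re 2 with h2 | h2
  · exact hbox w h0 h2 him
  set m := ⌊w.re - 1⌋₊
  have hm : (m : ℝ) ≤ w.re - 1 := Nat.floor_le (by linarith)
  have hm' : w.re - 1 < m + 1 := Nat.lt_floor_add_one _
  set w' := w - m
  have hw' : w'.re = w.re - m := by simp [w']
  have hle : ‖Gamma w'‖ ≤ ‖Gamma w‖ := by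
    have h := norm_Gamma_le_norm_Gamma_add_nat (s := w') (n := m) fun k _ =>
      (le_add_of_le_of_nonneg (by linarith) k.cast_nonneg).trans
        ((re_le_norm _).trans_eq' (by simp [hw']))
    simpa [w'] using h
  calc ‖(Gamma w)⁻¹‖ ≤ ‖(Gamma w')⁻¹‖ := by
        rw [norm_inv, norm_inv]
        exact inv_anti₀ (norm_pos_iff.2 (Gamma_ne_zero_of_re_pos (by linarith))) hle
    _ ≤ B := hbox w' (by linarith) (by linarith) (by simpa [w'] using him)

lemma exists_norm_inv_Gamma_le_of_re_nonneg :
    ∃ M, 0 < M ∧ ∀ w : ℂ, 0 ≤ w.re → ‖(Gamma w)⁻¹‖ ≤ M * Real.exp (π * ‖w‖) := by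
  obtain ⟨B, hB⟩ := exists_norm_inv_Gamma_le_of_abs_im_le_one
  refine ⟨max B 1, by positivity, fun w hw => ?_⟩
  rcases le_total |w.im| 1 with him | him
  · calc ‖(Gamma w)⁻¹‖ ≤ max B 1 := (hB w hw him).trans (le_max_left _ _)
      _ ≤ max B 1 * Real.exp (π * ‖w‖) :=
        le_mul_of_one_le_right (by positivity) (Real.one_le_exp (by positivity))
  · exact (norm_inv_Gamma_le_exp_of_one_le_abs_im hw him).trans
      (le_mul_of_one_le_left (by positivity) (le_max_right _ _))

lemma exists_norm_inv_Gamma_le :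
    ∃ M, 0 < M ∧ ∀ z : ℂ,
      ‖(Gamma z)⁻¹‖ ≤ M * Real.exp ((2 * ‖z‖ + 1) * (π + Real.log (2 * ‖z‖ + 1))) := by
  obtain ⟨M, hM, hbound⟩ := exists_norm_inv_Gamma_le_of_re_nonneg
  refine ⟨M, hM, fun z => ?_⟩
  set R := 2 * ‖z‖ + 1
  have hlogR : 0 ≤ Real.log R := Real.log_nonneg (by linarith [norm_nonneg z])
  rcases le_or_gt 0 z.re with hre | hre
  · refine (hbound z hre).trans ?_
    gcongr M * Real.exp ?_
    nlinarith [norm_nonneg z, Real.pi_pos]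
  set n := ⌈-z.re⌉₊
  have hn : (n : ℝ) < -z.re + 1 := Nat.ceil_lt_add_one (by linarith)
  have hnR : ‖z‖ + n ≤ R := by linarith [neg_le_abs z.re, abs_re_le_norm z]
  have hzn : 0 ≤ (z + n).re := by
    simp only [add_re, natCast_re]
    linarith [Nat.le_ceil (-z.re)]
  calc ‖(Gamma z)⁻¹‖ ≤ (‖z‖ + n) ^ n * ‖(Gamma (z + n))⁻¹‖ :=
        norm_inv_Gamma_le_pow_mul_norm_inv_Gamma_add_nat z n
    _ ≤ R ^ n * (M * Real.exp (π * R)) := by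
        gcongr
        refine (hbound _ hzn).trans ?_
        gcongr
        exact (norm_add_le _ _).trans (by simpa using hnR)
    _ = M * Real.exp (n * Real.log R + π * R) := by
        rw [Real.exp_add, ← Real.log_pow, Real.exp_log (by positivity)]
        ring
    _ ≤ M * Real.exp (R * (π + Real.log R)) := by
        gcongr
        nlinarith [norm_nonneg z]

end Complex

/-- Growth bound for the reciprocal Gamma function. -/
theorem stmt_1 :
    ∃ C : ℝ, 0 < C ∧ ∀ z : ℂ,
      ‖(Complex.Gamma z)⁻¹‖ ≤ C * Real.exp (C * ‖z‖ * Real.log (1 + ‖z‖)) := by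
  obtain ⟨M, hM, hbound⟩ := Complex.exists_norm_inv_Gamma_le
  refine ⟨M * Real.exp 16 + 21, by positivity, fun z => ?_⟩
  have hL : 0 ≤ ‖z‖ * Real.log (1 + ‖z‖) :=
    mul_nonneg (norm_nonneg z) (Real.log_nonneg (by linarith [norm_nonneg z]))
  have hM16 : M ≤ M * Real.exp 16 := le_mul_of_one_le_right hM.le (Real.one_le_exp (by norm_num))
  calc ‖(Complex.Gamma z)⁻¹‖ ≤ M * Real.exp (16 + 21 * (‖z‖ * Real.log (1 + ‖z‖))) :=
        (hbound z).trans (by gcongr; exact Real.two_mul_add_one_mul_pi_add_log_le (norm_nonneg z))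
    _ = M * Real.exp 16 * Real.exp (21 * (‖z‖ * Real.log (1 + ‖z‖))) := by
        rw [Real.exp_add, mul_assoc]
    _ ≤ (M * Real.exp 16 + 21) * Real.exp ((M * Real.exp 16 + 21) * ‖z‖ * Real.log (1 + ‖z‖)) := by
        rw [mul_assoc _ ‖z‖]
        gcongr <;> linarith
end

section
/- Let $(\lambda_j)_{j \ge 1}$ be nonzero complex numbers with $\inf_j |\lambda_j| \ge c_0 > 0$, $|\mathrm{Im}(\lambda_j)| \ge \delta > 0$ for all $j$, $|\lambda_j| \ge C_1 j^{1-\varepsilon}$ for some $\varepsilon \in (0, 1/2)$, and counting bound $\#\{j : |\lambda_j| \le r\} \le C_2(1 + r^{1+\varepsilon})$. Then for all real $\lambda$, $\sum_{j=1}^{\infty} \left| \frac{1}{\lambda_j + \lambda} + \frac{1}{\lambda_j - \lambda} - \frac{2}{\lambda_j} \right| \le C (1 + |\lambda|)^{1+\varepsilon}$ for a constant $C$ depending only on $c_0, \delta, \varepsilon, C_1, C_2$. -/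
/-!
Put `t = 1 + |λ|` and `R = 2t`. For the finitely many `λⱼ` with `|λⱼ| ≤ R` each summand is at
most `4 / δ`, because `|λⱼ ± λ| ≥ |Im λⱼ| ≥ δ`, and the counting bound makes their number
`O(t^(1+ε))`. For the others the summand equals `2λ² / (λⱼ (λⱼ - λ) (λⱼ + λ))`, which is at most
`8λ² / |λⱼ|³ ≤ 8λ² / (R^(1-ε) |λⱼ|^(2+ε))`; the growth bound turns `|λⱼ|^(-(2+ε))` into
`j^(-(1-ε)(2+ε))`, summable since `(1-ε)(2+ε) > 1` for `ε < 1/2`, and `λ² / R^(1-ε) ≤ t^(1+ε)`.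
-/

open Finset

section HadamardTerm

variable {𝕜 : Type*}

theorem one_div_add_add_one_div_sub_sub_two_div [Field 𝕜] {a b : 𝕜} (ha : a ≠ 0)
    (hab : a + b ≠ 0) (hab' : a - b ≠ 0) :
    1 / (a + b) + 1 / (a - b) - 2 / a = 2 * b ^ 2 / (a * (a - b) * (a + b)) := by
  field_simp
  ring

theorem norm_one_div_add_add_one_div_sub_sub_two_div_le [NormedField 𝕜] {a b : 𝕜}
    (hab : 2 * ‖b‖ < ‖a‖) :
    ‖1 / (a + b) + 1 / (a - b) - 2 / a‖ ≤ 8 * ‖b‖ ^ 2 / ‖a‖ ^ 3 := by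
  have ha : 0 < ‖a‖ := by linarith [norm_nonneg b]
  have hsub : ‖a‖ / 2 ≤ ‖a - b‖ := by linarith [norm_sub_norm_le a b]
  have hadd : ‖a‖ / 2 ≤ ‖a + b‖ := by linarith [norm_sub_le_norm_add a b]
  have hsub0 : a - b ≠ 0 := norm_pos_iff.mp (by linarith)
  have hadd0 : a + b ≠ 0 := norm_pos_iff.mp (by linarith)
  have htwo : ‖(2 : 𝕜)‖ ≤ 2 := by
    simpa [one_add_one_eq_two] using norm_add_le (1 : 𝕜) 1
  rw [one_div_add_add_one_div_sub_sub_two_div (norm_pos_iff.mp ha) hadd0 hsub0, norm_div,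
    norm_mul, norm_mul, norm_mul, norm_pow]
  calc ‖(2 : 𝕜)‖ * ‖b‖ ^ 2 / (‖a‖ * ‖a - b‖ * ‖a + b‖)
      ≤ 2 * ‖b‖ ^ 2 / (‖a‖ * (‖a‖ / 2) * (‖a‖ / 2)) := by gcongr
    _ = 8 * ‖b‖ ^ 2 / ‖a‖ ^ 3 := by field_simp; ring

theorem Complex.norm_one_div_add_ofReal_le {a : ℂ} {δ : ℝ} (hδ : 0 < δ) (ha : δ ≤ |a.im|)
    (x : ℝ) : ‖1 / (a + x)‖ ≤ 1 / δ := by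
  have him : (a + x).im = a.im := by simp
  rw [norm_div, norm_one]
  exact one_div_le_one_div_of_le hδ ((him ▸ ha).trans (Complex.abs_im_le_norm _))

theorem Complex.norm_one_div_add_add_one_div_sub_sub_two_div_le {a : ℂ} {δ : ℝ} (hδ : 0 < δ)
    (ha : δ ≤ |a.im|) (x : ℝ) :
    ‖1 / (a + x) + 1 / (a - x) - 2 / a‖ ≤ 4 / δ := by
  have hplus := Complex.norm_one_div_add_ofReal_le hδ ha x
  have hminus : ‖1 / (a - x)‖ ≤ 1 / δ := by
    simpa [sub_eq_add_neg] using Complex.norm_one_div_add_ofReal_le hδ ha (-x)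
  have hzero : ‖1 / a‖ ≤ 1 / δ := by
    simpa using Complex.norm_one_div_add_ofReal_le hδ ha 0
  have htwo : ‖2 / a‖ ≤ 2 / δ := by
    rw [div_eq_mul_one_div 2 a, norm_mul, Complex.norm_two, div_eq_mul_one_div 2 δ]
    gcongr
  calc ‖1 / (a + x) + 1 / (a - x) - 2 / a‖
      ≤ ‖1 / (a + x)‖ + ‖1 / (a - x)‖ + ‖2 / a‖ := norm_sub_le_of_le (norm_add_le _ _) le_rfl
    _ ≤ 1 / δ + 1 / δ + 2 / δ := by gcongr
    _ = 4 / δ := by ring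

end HadamardTerm

theorem Real.mul_rpow_le_rpow_add {u v A α β : ℝ} (hu : 0 ≤ u) (hv : 0 ≤ v) (huA : u ≤ A)
    (hvA : v ≤ A) (hα : 0 ≤ α) (hβ : 0 ≤ β) : u ^ α * v ^ β ≤ A ^ (α + β) := by
  have hA : 0 ≤ A := hu.trans huA
  rw [Real.rpow_add_of_nonneg hA hα hβ]
  gcongr

theorem one_add_mul_rpow_le {c t s : ℝ} (hc : 0 ≤ c) (ht : 1 ≤ t) (hs : 0 ≤ s) :
    1 + (c * t) ^ s ≤ (1 + c ^ s) * t ^ s := by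
  have hts : 1 ≤ t ^ s := Real.one_le_rpow ht hs
  rw [Real.mul_rpow hc (by linarith)]
  nlinarith [Real.rpow_nonneg hc s]

theorem sq_div_rpow_le_rpow {y ε : ℝ} (hy : 0 ≤ y) (hε0 : 0 ≤ ε) (hε1 : ε ≤ 1) :
    y ^ 2 / (2 * (1 + y)) ^ (1 - ε) ≤ (1 + y) ^ (1 + ε) := by
  rw [div_le_iff₀ (by positivity)]
  calc y ^ 2 = y ^ (1 + ε) * y ^ (1 - ε) := by
        rw [← Real.rpow_add_of_nonneg hy (by linarith) (by linarith)]
        norm_num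
    _ ≤ (1 + y) ^ (1 + ε) * (2 * (1 + y)) ^ (1 - ε) := by
        gcongr <;> linarith

theorem rpow_mul_rpow_mul_rpow_le_pow_three {A R C n ε : ℝ} (hR : 0 ≤ R) (hC : 0 ≤ C)
    (hn : 0 ≤ n) (hε0 : 0 ≤ ε) (hε1 : ε ≤ 1) (hRA : R ≤ A) (hnA : C * n ^ (1 - ε) ≤ A) :
    R ^ (1 - ε) * C ^ (2 + ε) * n ^ ((1 - ε) * (2 + ε)) ≤ A ^ 3 := by
  have h := Real.mul_rpow_le_rpow_add (α := 1 - ε) (β := 2 + ε) hR (by positivity) hRA hnA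
    (by linarith) (by linarith)
  rw [show 1 - ε + (2 + ε) = ((3 : ℕ) : ℝ) by norm_num, Real.rpow_natCast,
    Real.mul_rpow hC (by positivity), ← Real.rpow_mul hn] at h
  linarith

theorem norm_one_div_add_add_one_div_sub_sub_two_div_le_of_growth {𝕜 : Type*} [NormedField 𝕜]
    {a b : 𝕜} {R C n ε : ℝ} (hC : 0 < C) (hn : 0 < n) (hε0 : 0 ≤ ε) (hε1 : ε ≤ 1)
    (hbR : 2 * ‖b‖ < R) (hRa : R ≤ ‖a‖) (hna : C * n ^ (1 - ε) ≤ ‖a‖) :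
    ‖1 / (a + b) + 1 / (a - b) - 2 / a‖
      ≤ 8 / C ^ (2 + ε) * (‖b‖ ^ 2 / R ^ (1 - ε)) * (n ^ ((1 - ε) * (2 + ε)))⁻¹ := by
  have hR : 0 < R := by linarith [norm_nonneg b]
  calc ‖1 / (a + b) + 1 / (a - b) - 2 / a‖ ≤ 8 * ‖b‖ ^ 2 / ‖a‖ ^ 3 :=
        norm_one_div_add_add_one_div_sub_sub_two_div_le (hbR.trans_le hRa)
    _ ≤ 8 * ‖b‖ ^ 2 / (R ^ (1 - ε) * C ^ (2 + ε) * n ^ ((1 - ε) * (2 + ε))) := by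
        gcongr
        exact rpow_mul_rpow_mul_rpow_le_pow_three hR.le hC.le hn.le hε0 hε1 hRa hna
    _ = _ := by field_simp

theorem summable_and_tsum_le_of_le_of_notMem {ι : Type*} {f g : ι → ℝ} (S : Finset ι) {M K : ℝ}
    (hf : ∀ j, 0 ≤ f j) (hg : ∀ j, 0 ≤ g j) (hgs : Summable g) (hK : 0 ≤ K)
    (hS : ∀ j ∈ S, f j ≤ M) (hSc : ∀ j ∉ S, f j ≤ K * g j) :
    Summable f ∧ ∑' j, f j ≤ #S * M + K * ∑' j, g j := by
  classical
  set h : ι → ℝ := fun j => (if j ∈ S then M else 0) + K * g j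
  have hfh : ∀ j, f j ≤ h j := by
    intro j
    by_cases hj : j ∈ S
    · simpa [h, hj] using le_add_of_le_of_nonneg (hS j hj) (mul_nonneg hK (hg j))
    · simpa [h, hj] using hSc j hj
  have hh : HasSum h (#S * M + K * ∑' j, g j) := by
    refine HasSum.add ?_ (hgs.hasSum.mul_left K)
    have hM : HasSum (fun j => if j ∈ S then M else 0) (∑ j ∈ S, if j ∈ S then M else 0) :=
      hasSum_sum_of_ne_finset_zero fun j hj => if_neg hj
    simpa using hM
  have hfs : Summable f := .of_nonneg_of_le hf hfh hh.summable
  exact ⟨hfs, hh.tsum_eq ▸ hfs.tsum_le_tsum hfh hh.summable⟩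

theorem Set.finite_and_ncard_eq_of_finite_succ {P : ℕ → Prop} (h : {j | 1 ≤ j ∧ P j}.Finite) :
    {j | P (j + 1)}.Finite ∧ {j | P (j + 1)}.ncard = {j | 1 ≤ j ∧ P j}.ncard := by
  have hpre : {j | P (j + 1)} = (· + 1) ⁻¹' {j | 1 ≤ j ∧ P j} := by
    ext j
    simp
  rw [hpre]
  refine ⟨h.preimage (add_left_injective 1).injOn, ?_⟩
  refine Set.ncard_preimage_of_injective_subset_range (add_left_injective 1) ?_
  rintro j ⟨hj, -⟩
  exact ⟨j - 1, Nat.sub_add_cancel hj⟩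

theorem stmt_9_general (c₀ δ ε C₁ C₂ : ℝ) (hδ : 0 < δ)
    (hε0 : 0 < ε) (hε : ε < 1 / 2) (hC₁ : 0 < C₁) (hC₂ : 0 < C₂) :
    ∃ C : ℝ, 0 < C ∧
      ∀ lam : ℕ → ℂ,
        (∀ j, 1 ≤ j → lam j ≠ 0) →
        (∀ j, 1 ≤ j → c₀ ≤ ‖lam j‖) →
        (∀ j, 1 ≤ j → δ ≤ |(lam j).im|) →
        (∀ j : ℕ, 1 ≤ j → C₁ * (j : ℝ) ^ (1 - ε) ≤ ‖lam j‖) →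
        (∀ r : ℝ, 0 < r →
          {j : ℕ | 1 ≤ j ∧ ‖lam j‖ ≤ r}.Finite ∧
          (Nat.card {j : ℕ | 1 ≤ j ∧ ‖lam j‖ ≤ r} : ℝ) ≤ C₂ * (1 + r ^ (1 + ε))) →
        ∀ lamr : ℝ,
          (Summable fun j : ℕ =>
            ‖1 / (lam (j + 1) + lamr) + 1 / (lam (j + 1) - lamr) - 2 / lam (j + 1)‖) ∧
          (∑' j : ℕ,
            ‖1 / (lam (j + 1) + lamr) + 1 / (lam (j + 1) - lamr) - 2 / lam (j + 1)‖)
            ≤ C * (1 + |lamr|) ^ (1 + ε) := by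
  set p : ℝ := (1 - ε) * (2 + ε)
  have hp : 1 < p := by nlinarith
  have hZs : Summable fun j : ℕ => (((j + 1 : ℕ) : ℝ) ^ p)⁻¹ :=
    (summable_nat_add_iff 1).mpr (Real.summable_nat_rpow_inv.mpr hp)
  set Z := ∑' j : ℕ, (((j + 1 : ℕ) : ℝ) ^ p)⁻¹
  have hZ : 0 ≤ Z := tsum_nonneg fun j => by positivity
  refine ⟨4 / δ * (C₂ * (1 + 2 ^ (1 + ε))) + 8 / C₁ ^ (2 + ε) * Z, by positivity, ?_⟩
  intro lam _ _ him hgrow hcount x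
  set y := ‖(x : ℂ)‖
  have hy : y = |x| := by simp [y]
  set R := 2 * (1 + y)
  obtain ⟨hfin, hcard⟩ := hcount R (by positivity)
  obtain ⟨hSfin, hSncard⟩ := Set.finite_and_ncard_eq_of_finite_succ hfin
  obtain ⟨hsum, hle⟩ := summable_and_tsum_le_of_le_of_notMem hSfin.toFinset
    (fun _ => norm_nonneg _) (fun _ => by positivity) hZs (by positivity)
    (fun j _ => Complex.norm_one_div_add_add_one_div_sub_sub_two_div_le hδ
      (him (j + 1) j.succ_pos) x)
    (fun j hj => norm_one_div_add_add_one_div_sub_sub_two_div_le_of_growth (R := R) hC₁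
      (by positivity) hε0.le (by linarith) (by linarith [norm_nonneg (x : ℂ)])
      (lt_of_not_ge (by simpa using hj)).le (hgrow (j + 1) j.succ_pos))
  refine ⟨hsum, hle.trans ?_⟩
  have hcardS : (#hSfin.toFinset : ℝ) ≤ C₂ * (1 + 2 ^ (1 + ε)) * (1 + y) ^ (1 + ε) := by
    rw [← Set.ncard_eq_toFinset_card _ hSfin, hSncard, ← Nat.card_coe_set_eq, mul_assoc]
    refine hcard.trans ?_
    gcongr
    exact one_add_mul_rpow_le zero_le_two (by linarith [norm_nonneg (x : ℂ)]) (by linarith)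
  have hK := sq_div_rpow_le_rpow (norm_nonneg (x : ℂ)) hε0.le (by linarith)
  rw [← hy]
  calc (#hSfin.toFinset : ℝ) * (4 / δ) + 8 / C₁ ^ (2 + ε) * (y ^ 2 / R ^ (1 - ε)) * Z
      ≤ C₂ * (1 + 2 ^ (1 + ε)) * (1 + y) ^ (1 + ε) * (4 / δ)
        + 8 / C₁ ^ (2 + ε) * (1 + y) ^ (1 + ε) * Z := by gcongr
    _ = _ := by ring

/-- Uniform summability estimate for the Hadamard-factorization expansion,
with a constant depending only on `c₀, δ, ε, C₁, C₂`. -/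
theorem stmt_9 (c₀ δ ε C₁ C₂ : ℝ) (hc₀ : 0 < c₀) (hδ : 0 < δ)
    (hε0 : 0 < ε) (hε : ε < 1 / 2) (hC₁ : 0 < C₁) (hC₂ : 0 < C₂) :
    ∃ C : ℝ, 0 < C ∧
      ∀ lam : ℕ → ℂ,
        (∀ j, 1 ≤ j → lam j ≠ 0) →
        (∀ j, 1 ≤ j → c₀ ≤ ‖lam j‖) →
        (∀ j, 1 ≤ j → δ ≤ |(lam j).im|) →
        (∀ j : ℕ, 1 ≤ j → C₁ * (j : ℝ) ^ (1 - ε) ≤ ‖lam j‖) →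
        (∀ r : ℝ, 0 < r →
          {j : ℕ | 1 ≤ j ∧ ‖lam j‖ ≤ r}.Finite ∧
          (Nat.card {j : ℕ | 1 ≤ j ∧ ‖lam j‖ ≤ r} : ℝ) ≤ C₂ * (1 + r ^ (1 + ε))) →
        ∀ lamr : ℝ,
          (Summable fun j : ℕ =>
            ‖1 / (lam (j + 1) + lamr) + 1 / (lam (j + 1) - lamr) - 2 / lam (j + 1)‖) ∧
          (∑' j : ℕ,
            ‖1 / (lam (j + 1) + lamr) + 1 / (lam (j + 1) - lamr) - 2 / lam (j + 1)‖)
            ≤ C * (1 + |lamr|) ^ (1 + ε) :=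
  stmt_9_general c₀ δ ε C₁ C₂ hδ hε0 hε hC₁ hC₂
end
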